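/- Theorem 3 (ELRT achieves bounded regret for N demand models). Let i ∈ Fin N be the true demand model and consider a pricing process under model i following the ELRT policy. For each h ≠ i set a_h = min over k ∈ Fin N of I(q i k ‖ q h k) (so a_h > 0 by the non-uninformative condition), let m_h and M_h be the minimum and maximum over k ∈ Fin N and y ∈ {0,1} of log(f i k y / f h k y), and set C_h = (M_h − m_h)²/(2 a_h²). Then for every horizon T ≥ 1, E[#{t : 1 ≤ t ≤ T, a_t ≠ i}] ≤ 1 + Σ_{h ≠ i} C_h ≤ 1 + (N − 1) · max_{h ≠ i} C_h; consequently, for revenues r : Fin N → Fin N → ℝ with r i i ≥ r i k for all k, the regret Δ_i(T) = T · r i i − E[Σ_{t=1}^T r i (a_t)] is bounded by a constant independent of T. -/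

import Mathlib

open MeasureTheory ProbabilityTheory Finset Real

noncomputable section

/-- Probability of outcome `y ∈ {0,1}` under a Bernoulli distribution with success
probability `p`:  `f p y = p^y (1-p)^(1-y)`. -/
def bern (p : ℝ) (y : ℕ) : ℝ := p ^ y * (1 - p) ^ (1 - y)

/-- The Kullback–Leibler divergence between Bernoulli(α) and Bernoulli(β). -/
def klBern (α β : ℝ) : ℝ :=
  α * Real.log (α / β) + (1 - α) * Real.log ((1 - α) / (1 - β))

variable {Ω : Type*} {mΩ : MeasurableSpace Ω} {N : ℕ}

/-- The pairwise (unnormalized) log-likelihood statistic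
`L_{i,h}(t) = ∑_{j=1}^t log (f_i^{a_j}(y_j) / f_h^{a_j}(y_j))`, with `L_{i,h}(0) = 0`. -/
def LLRN (q : Fin N → Fin N → ℝ) (a : ℕ → Ω → Fin N) (y : ℕ → Ω → ℕ)
    (i h : Fin N) (t : ℕ) (ω : Ω) : ℝ :=
  ∑ j ∈ Finset.Icc 1 t,
    Real.log (bern (q i (a j ω)) (y j ω) / bern (q h (a j ω)) (y j ω))

/-- An `N`-demand-model pricing process under true demand model `i`: actions `a t` are
`ℱ (t-1)`-measurable, outcomes `y t ∈ {0,1}` are `ℱ t`-measurable, and the conditional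
probability of a successful sale at time `t` given the past is `q i (a t)` a.s. -/
structure IsPricingProcessN (μ : Measure Ω) (ℱ : Filtration ℕ mΩ)
    (q : Fin N → Fin N → ℝ) (i : Fin N) (a : ℕ → Ω → Fin N) (y : ℕ → Ω → ℕ) : Prop where
  meas_a : ∀ t, 1 ≤ t → Measurable[ℱ (t - 1)] (a t)
  meas_y : ∀ t, 1 ≤ t → Measurable[ℱ t] (y t)
  y_range : ∀ t, 1 ≤ t → ∀ ω, y t ω = 0 ∨ y t ω = 1
  sale_prob : ∀ t, 1 ≤ t →
    μ[Set.indicator {ω | y t ω = 1} (fun _ => (1 : ℝ)) | ℱ (t - 1)]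
      =ᵐ[μ] fun ω => q i (a t ω)

/-- The ELRT policy: for `t ≥ 1`, `a (t+1) = k` whenever `k` is an index with
`L_{k,j}(t) > 0` for every `j ≠ k` (an arbitrary choice is made if no such `k` exists). -/
def IsELRT (q : Fin N → Fin N → ℝ) (a : ℕ → Ω → Fin N) (y : ℕ → Ω → ℕ) : Prop :=
  ∀ t, 1 ≤ t → ∀ ω, ∀ k : Fin N,
    (∀ j, j ≠ k → 0 < LLRN q a y k j t ω) → a (t + 1) ω = k

/-! Under the true model `i`, each increment of `L_{i,h}` is bounded in `[m_h, M_h]` and has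
conditional mean at least `a_h` (a Kullback–Leibler divergence), whatever arm is played. By
Hoeffding's lemma, `exp (-λ L_{i,h}(t))` with `λ = 4 a_h / (M_h - m_h)²` then has expectation at
most `ρ_h ^ t`, where `ρ_h = exp (-1 / C_h)`, so `P(L_{i,h}(t) ≤ 0) ≤ ρ_h ^ t`, and these
probabilities sum to at most `C_h`. ELRT can play a wrong arm at time `t + 1` only if some
`L_{i,h}(t) ≤ 0`, and the regret is at most the largest revenue gap times the expected number
of wrong plays. -/

open InformationTheory in
lemma klBern_pos {α β : ℝ} (hα : α ∈ Set.Ioo 0 1) (hβ : β ∈ Set.Ioo 0 1) (hne : α ≠ β) :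
    0 < klBern α β := by
  obtain ⟨hα0, hα1⟩ := hα
  obtain ⟨hβ0, hβ1⟩ := hβ
  have hsplit : klBern α β = β * klFun (α / β) + (1 - β) * klFun ((1 - α) / (1 - β)) := by
    simp only [klBern, klFun_apply]
    field_simp
    ring
  have hpos : 0 < klFun (α / β) :=
    (klFun_nonneg (by positivity)).lt_of_ne' fun h => hne <| by
      rwa [klFun_eq_zero_iff (by positivity), div_eq_one_iff_eq hβ0.ne'] at h
  have hnonneg : 0 ≤ klFun ((1 - α) / (1 - β)) :=
    klFun_nonneg (div_nonneg (by linarith) (by linarith))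
  rw [hsplit]
  exact add_pos_of_pos_of_nonneg (mul_pos hβ0 hpos) (mul_nonneg (by linarith) hnonneg)

lemma two_point_mgf_le {p : ℝ} (hp : p ∈ Set.Icc 0 1) (A B t : ℝ) :
    p * exp (t * A) + (1 - p) * exp (t * B)
      ≤ exp (t * (p * A + (1 - p) * B) + t ^ 2 * (A - B) ^ 2 / 8) := by
  set m := p * A + (1 - p) * B
  set ν := bernoulliMeasure A B ⟨p, hp⟩
  have hmean : ν[id] = m := by simp [ν, m, integral_bernoulliMeasure]
  have hbdd : ∀ᵐ x ∂ν, id x ∈ Set.Icc (min A B) (max A B) :=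
    ae_iff.2 <| bernoulliMeasure_apply_of_notMem_of_notMem _ measurableSet_Icc.compl
      (by simp) (by simp)
  have hoeffding := (hasSubgaussianMGF_of_mem_Icc aemeasurable_id hbdd).mgf_le t
  rw [hmean, mgf, integral_bernoulliMeasure] at hoeffding
  have hvar : (((‖max A B - min A B‖₊ / 2) ^ 2 : NNReal) : ℝ) = (A - B) ^ 2 / 4 := by
    rw [max_sub_min_eq_abs]
    push_cast
    rw [norm_abs_eq_norm, Real.norm_eq_abs, div_pow, sq_abs, ← neg_sub, neg_sq]
    ring
  calc p * exp (t * A) + (1 - p) * exp (t * B)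
      = (p * exp (t * (A - m)) + (1 - p) * exp (t * (B - m))) * exp (t * m) := by
        simp only [add_mul, mul_assoc, ← exp_add]
        ring_nf
    _ ≤ exp ((A - B) ^ 2 / 4 * t ^ 2 / 2) * exp (t * m) := by
        rw [← hvar]
        gcongr
        simpa using hoeffding
    _ = exp (t * m + t ^ 2 * (A - B) ^ 2 / 8) := by
        rw [← exp_add]
        ring_nf

/-- `4κ / (M - m)²` is the exponent `s` minimising Hoeffding's bound
`exp (-s κ + s² (M - m)² / 8)`. -/
lemma two_point_exp_neg_le {p A B κ m M : ℝ} (hp : p ∈ Set.Icc 0 1) (hA : A ∈ Set.Icc m M)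
    (hB : B ∈ Set.Icc m M) (hκ0 : 0 ≤ κ) (hκ : κ ≤ p * A + (1 - p) * B) :
    p * exp (-(4 * κ / (M - m) ^ 2) * A) + (1 - p) * exp (-(4 * κ / (M - m) ^ 2) * B)
      ≤ exp (-(2 * κ ^ 2 / (M - m) ^ 2)) := by
  set s := 4 * κ / (M - m) ^ 2
  have hs : 0 ≤ s := by positivity
  have hspread : (A - B) ^ 2 ≤ (M - m) ^ 2 :=
    sq_le_sq' (by linarith [hA.1, hB.2]) (by linarith [hA.2, hB.1])
  have hopt : -s * κ + s ^ 2 * (M - m) ^ 2 / 8 = -(2 * κ ^ 2 / (M - m) ^ 2) := by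
    rcases eq_or_ne ((M - m) ^ 2) 0 with h0 | h0
    · simp [s, h0]
    · simp only [s]
      field_simp
      ring
  refine (two_point_mgf_le hp A B (-s)).trans (exp_le_exp.2 ?_)
  rw [← hopt, neg_sq]
  gcongr ?_ + ?_
  · nlinarith
  · gcongr

lemma sum_Icc_exp_neg_pow_le {c : ℝ} (hc : 0 < c) (n : ℕ) :
    ∑ s ∈ Icc 1 n, exp (-c) ^ s ≤ 1 / c := by
  have hr : exp (-c) < 1 := exp_lt_one_iff.2 (neg_lt_zero.2 hc)
  have hexp : exp (-c) * exp c = 1 := by rw [← exp_add, neg_add_cancel, exp_zero]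
  have hc1 := add_one_le_exp c
  calc ∑ s ∈ Icc 1 n, exp (-c) ^ s = ∑ s ∈ Ico 1 (n + 1), exp (-c) ^ s := rfl
    _ ≤ exp (-c) ^ 1 / (1 - exp (-c)) := geom_sum_Ico_le_of_lt_one (exp_pos _).le hr
    _ ≤ 1 / c := by
        rw [div_le_div_iff₀ (sub_pos.2 hr) hc, pow_one]
        nlinarith [exp_pos (-c)]

lemma MeasureTheory.Integrable.mul_comp_fintype {ι : Type*} [Fintype ι] [MeasurableSpace ι]
    [DiscreteMeasurableSpace ι] {μ : Measure Ω} {Z : Ω → ℝ} (hZ : Integrable Z μ) {X : Ω → ι}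
    (hX : Measurable X) (g : ι → ℝ) : Integrable (fun ω => Z ω * g (X ω)) μ :=
  hZ.mul_bdd (Measurable.of_discrete.comp hX).aestronglyMeasurable
    (ae_of_all _ fun ω => norm_le_pi_norm g (X ω))

lemma integral_card_filter {ι : Type*} {μ : Measure Ω} [IsFiniteMeasure μ] (s : Finset ι)
    (P : ι → Ω → Prop) [∀ t ω, Decidable (P t ω)] (hP : ∀ t ∈ s, MeasurableSet {ω | P t ω}) :
    ∫ ω, (#{t ∈ s | P t ω} : ℝ) ∂μ = ∑ t ∈ s, μ.real {ω | P t ω} := by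
  have hcard : ∀ ω, (#{t ∈ s | P t ω} : ℝ) = ∑ t ∈ s, {ω | P t ω}.indicator 1 ω := fun ω => by
    rw [natCast_card_filter]
    exact sum_congr rfl fun t _ => by simp [Set.indicator_apply]
  rw [integral_congr_ae (ae_of_all _ hcard),
    integral_finsetSum _ fun t ht => (integrable_const 1).indicator (hP t ht)]
  exact sum_congr rfl fun t ht => integral_indicator_one (hP t ht)

/-- `bernLLR q i h (a j ω) (y j ω)` is the `j`-th summand of `LLRN q a y i h t ω`. -/
def bernLLR (q : Fin N → Fin N → ℝ) (i h k : Fin N) (b : ℕ) : ℝ :=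
  Real.log (bern (q i k) b / bern (q h k) b)

lemma klBern_eq_bernLLR (q : Fin N → Fin N → ℝ) (i h k : Fin N) :
    klBern (q i k) (q h k) = q i k * bernLLR q i h k 1 + (1 - q i k) * bernLLR q i h k 0 := by
  simp [klBern, bernLLR, bern]

lemma lt_of_bernLLR_mem_Icc {q : Fin N → Fin N → ℝ} {i h k : Fin N} {m M : ℝ}
    (hi : q i k ∈ Set.Ioo 0 1) (hh : q h k ∈ Set.Ioo 0 1) (hne : q i k ≠ q h k)
    (h1 : bernLLR q i h k 1 ∈ Set.Icc m M) (h0 : bernLLR q i h k 0 ∈ Set.Icc m M) : m < M := by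
  obtain ⟨hi0, hi1⟩ := hi
  obtain ⟨hh0, hh1⟩ := hh
  by_contra! hle
  have heq : bernLLR q i h k 1 = bernLLR q i h k 0 := by linarith [h1.1, h1.2, h0.1, h0.2]
  simp only [bernLLR, bern, pow_one, pow_zero, one_mul, mul_one, tsub_zero, tsub_self] at heq
  have := Real.log_injOn_pos (Set.mem_Ioi.2 (by positivity))
    (Set.mem_Ioi.2 (div_pos (by linarith) (by linarith))) heq
  rw [div_eq_div_iff hh0.ne' (by linarith)] at this
  exact hne (by linarith)

section PricingProcess

variable {μ : Measure Ω} {ℱ : Filtration ℕ mΩ} {q : Fin N → Fin N → ℝ} {i : Fin N}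
  {a : ℕ → Ω → Fin N} {y : ℕ → Ω → ℕ}

namespace IsPricingProcessN

lemma measurable_action (hproc : IsPricingProcessN μ ℱ q i a y) {t : ℕ} (ht : 1 ≤ t) :
    Measurable (a t) :=
  (hproc.meas_a t ht).mono (ℱ.le _) le_rfl

lemma measurable_action_succ (hproc : IsPricingProcessN μ ℱ q i a y) (t : ℕ) :
    Measurable[ℱ t] (a (t + 1)) := by
  simpa using hproc.meas_a (t + 1) (Nat.le_add_left 1 t)

lemma measurable_sum_outcomes (hproc : IsPricingProcessN μ ℱ q i a y) (φ : Fin N → ℕ → ℝ)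
    (t : ℕ) : Measurable[ℱ t] fun ω => ∑ j ∈ Icc 1 t, φ (a j ω) (y j ω) := by
  refine Finset.measurable_sum _ fun j hj => ?_
  obtain ⟨hj1, hjt⟩ := mem_Icc.1 hj
  exact (Measurable.of_discrete (f := fun p : Fin N × ℕ => φ p.1 p.2)).comp
    (((hproc.meas_a j hj1).mono (ℱ.mono (by omega)) le_rfl).prodMk
      ((hproc.meas_y j hj1).mono (ℱ.mono hjt) le_rfl))

lemma measurableSet_sale (hproc : IsPricingProcessN μ ℱ q i a y) (t : ℕ) :
    MeasurableSet {ω | y (t + 1) ω = 1} :=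
  (hproc.meas_y (t + 1) (Nat.le_add_left 1 t)).mono (ℱ.le _) le_rfl (measurableSet_singleton 1)

lemma integrable_mul_indicator_sale (hproc : IsPricingProcessN μ ℱ q i a y) (t : ℕ)
    {Z : Ω → ℝ} (hZ : Integrable Z μ) :
    Integrable (fun ω => Z ω * {ω | y (t + 1) ω = 1}.indicator (fun _ => (1 : ℝ)) ω) μ :=
  (hZ.indicator (hproc.measurableSet_sale t)).congr <| ae_of_all _ fun ω => by
    by_cases hω : y (t + 1) ω = 1 <;> simp [hω]

lemma integral_mul_indicator_sale [IsFiniteMeasure μ] (hproc : IsPricingProcessN μ ℱ q i a y)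
    (t : ℕ) {Z : Ω → ℝ} (hZm : Measurable[ℱ t] Z) (hZ : Integrable Z μ) :
    ∫ ω, Z ω * {ω | y (t + 1) ω = 1}.indicator (fun _ => (1 : ℝ)) ω ∂μ
      = ∫ ω, Z ω * q i (a (t + 1) ω) ∂μ := by
  have hsale := hproc.sale_prob (t + 1) (Nat.le_add_left 1 t)
  rw [Nat.add_sub_cancel] at hsale
  calc ∫ ω, Z ω * {ω | y (t + 1) ω = 1}.indicator (fun _ => (1 : ℝ)) ω ∂μ
      = ∫ ω, (μ[Z * {ω | y (t + 1) ω = 1}.indicator (fun _ => (1 : ℝ)) | ℱ t]) ω ∂μ :=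
        (integral_condExp (ℱ.le t)).symm
    _ = ∫ ω, (Z * μ[{ω | y (t + 1) ω = 1}.indicator (fun _ => (1 : ℝ)) | ℱ t]) ω ∂μ :=
        integral_congr_ae <| condExp_mul_of_stronglyMeasurable_left hZm.stronglyMeasurable
          (hproc.integrable_mul_indicator_sale t hZ)
          ((integrable_const 1).indicator (hproc.measurableSet_sale t))
    _ = ∫ ω, Z ω * q i (a (t + 1) ω) ∂μ :=
        integral_congr_ae <| by filter_upwards [hsale] with ω hω using by simp [hω]

lemma mul_outcome_eq (hproc : IsPricingProcessN μ ℱ q i a y) (t : ℕ) (Z : Ω → ℝ)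
    (φ : Fin N → ℕ → ℝ) (ω : Ω) :
    Z ω * φ (a (t + 1) ω) (y (t + 1) ω) = Z ω * φ (a (t + 1) ω) 0
      + Z ω * (φ (a (t + 1) ω) 1 - φ (a (t + 1) ω) 0)
        * {ω | y (t + 1) ω = 1}.indicator (fun _ => (1 : ℝ)) ω := by
  rcases hproc.y_range (t + 1) (Nat.le_add_left 1 t) ω with h | h
  · simp [h]
  · simp [h]
    ring

lemma integrable_mul_outcome [IsFiniteMeasure μ] (hproc : IsPricingProcessN μ ℱ q i a y)
    (t : ℕ) {Z : Ω → ℝ} (hZ : Integrable Z μ) (φ : Fin N → ℕ → ℝ) :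
    Integrable (fun ω => Z ω * φ (a (t + 1) ω) (y (t + 1) ω)) μ := by
  have ha := hproc.measurable_action (Nat.le_add_left 1 t)
  simp_rw [hproc.mul_outcome_eq t Z φ]
  exact (hZ.mul_comp_fintype ha fun k => φ k 0).add
    (hproc.integrable_mul_indicator_sale t (hZ.mul_comp_fintype ha fun k => φ k 1 - φ k 0))

lemma integral_mul_outcome [IsFiniteMeasure μ] (hproc : IsPricingProcessN μ ℱ q i a y) (t : ℕ)
    {Z : Ω → ℝ} (hZm : Measurable[ℱ t] Z) (hZ : Integrable Z μ) (φ : Fin N → ℕ → ℝ) :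
    ∫ ω, Z ω * φ (a (t + 1) ω) (y (t + 1) ω) ∂μ
      = ∫ ω, Z ω * (q i (a (t + 1) ω) * φ (a (t + 1) ω) 1
          + (1 - q i (a (t + 1) ω)) * φ (a (t + 1) ω) 0) ∂μ := by
  set ψ : Fin N → ℝ := fun k => φ k 1 - φ k 0
  have ha := hproc.measurable_action (Nat.le_add_left 1 t)
  have hZ0 := hZ.mul_comp_fintype ha fun k => φ k 0
  have hZψ := hZ.mul_comp_fintype ha ψ
  have hZψm : Measurable[ℱ t] fun ω => Z ω * ψ (a (t + 1) ω) :=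
    hZm.mul ((Measurable.of_discrete (f := ψ)).comp (hproc.measurable_action_succ t))
  calc ∫ ω, Z ω * φ (a (t + 1) ω) (y (t + 1) ω) ∂μ
      = ∫ ω, Z ω * φ (a (t + 1) ω) 0
          + Z ω * ψ (a (t + 1) ω) * {ω | y (t + 1) ω = 1}.indicator (fun _ => (1 : ℝ)) ω ∂μ :=
        integral_congr_ae (ae_of_all _ (hproc.mul_outcome_eq t Z φ))
    _ = ∫ ω, Z ω * φ (a (t + 1) ω) 0 + Z ω * ψ (a (t + 1) ω) * q i (a (t + 1) ω) ∂μ := by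
        rw [integral_add hZ0 (hproc.integrable_mul_indicator_sale t hZψ),
          hproc.integral_mul_indicator_sale t hZψm hZψ,
          integral_add hZ0 (hZψ.mul_comp_fintype ha (q i))]
    _ = _ := by
        congr 1 with ω
        ring

lemma integral_exp_sum_outcomes_le [IsProbabilityMeasure μ]
    (hproc : IsPricingProcessN μ ℱ q i a y) (φ : Fin N → ℕ → ℝ) {ρ : ℝ} (hρ0 : 0 ≤ ρ)
    (hρ : ∀ k, q i k * exp (φ k 1) + (1 - q i k) * exp (φ k 0) ≤ ρ) (t : ℕ) :
    Integrable (fun ω => exp (∑ j ∈ Icc 1 t, φ (a j ω) (y j ω))) μ ∧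
      ∫ ω, exp (∑ j ∈ Icc 1 t, φ (a j ω) (y j ω)) ∂μ ≤ ρ ^ t := by
  induction t with
  | zero => simp
  | succ t ih =>
    obtain ⟨hint, hle⟩ := ih
    have ha := hproc.measurable_action (Nat.le_add_left 1 t)
    have hsplit : ∀ ω, exp (∑ j ∈ Icc 1 (t + 1), φ (a j ω) (y j ω))
        = exp (∑ j ∈ Icc 1 t, φ (a j ω) (y j ω)) * exp (φ (a (t + 1) ω) (y (t + 1) ω)) :=
      fun ω => by rw [sum_Icc_succ_top (Nat.le_add_left 1 t), exp_add]
    simp_rw [hsplit]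
    refine ⟨hproc.integrable_mul_outcome t hint fun k b => exp (φ k b), ?_⟩
    rw [hproc.integral_mul_outcome t (hproc.measurable_sum_outcomes φ t).exp hint
      fun k b => exp (φ k b)]
    calc _ ≤ ∫ ω, exp (∑ j ∈ Icc 1 t, φ (a j ω) (y j ω)) * ρ ∂μ :=
          integral_mono
            (hint.mul_comp_fintype ha fun k => q i k * exp (φ k 1) + (1 - q i k) * exp (φ k 0))
            (hint.mul_const ρ) fun ω => mul_le_mul_of_nonneg_left (hρ _) (exp_pos _).le
      _ ≤ ρ ^ t * ρ := by
          rw [integral_mul_const]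
          exact mul_le_mul_of_nonneg_right hle hρ0
      _ = ρ ^ (t + 1) := (pow_succ ρ t).symm

lemma measureReal_LLRN_nonpos_le [IsProbabilityMeasure μ]
    (hproc : IsPricingProcessN μ ℱ q i a y) (hq : ∀ k, q i k ∈ Set.Icc 0 1) {h : Fin N}
    {κ m M : ℝ} (hκ0 : 0 ≤ κ) (hκ : ∀ k, κ ≤ klBern (q i k) (q h k))
    (hLLR : ∀ k (b : Fin 2), bernLLR q i h k b ∈ Set.Icc m M) (t : ℕ) :
    μ.real {ω | LLRN q a y i h t ω ≤ 0} ≤ exp (-(2 * κ ^ 2 / (M - m) ^ 2)) ^ t := by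
  set s := 4 * κ / (M - m) ^ 2
  have hρ : ∀ k, q i k * exp (-s * bernLLR q i h k 1) + (1 - q i k) * exp (-s * bernLLR q i h k 0)
      ≤ exp (-(2 * κ ^ 2 / (M - m) ^ 2)) := fun k =>
    two_point_exp_neg_le (hq k) (hLLR k 1) (hLLR k 0) hκ0
      ((hκ k).trans_eq (klBern_eq_bernLLR q i h k))
  obtain ⟨hint, hle⟩ :=
    hproc.integral_exp_sum_outcomes_le (fun k b => -s * bernLLR q i h k b) (exp_pos _).le hρ t
  have hexp : ∀ ω, exp (-s * LLRN q a y i h t ω)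
      = exp (∑ j ∈ Icc 1 t, -s * bernLLR q i h (a j ω) (y j ω)) := fun ω => by
    rw [LLRN, mul_sum]
    rfl
  calc μ.real {ω | LLRN q a y i h t ω ≤ 0}
      ≤ exp (-(-s) * 0) * mgf (LLRN q a y i h t) μ (-s) :=
        measure_le_le_exp_mul_mgf 0 (neg_nonpos.2 (by positivity)) (by simpa only [hexp] using hint)
    _ = ∫ ω, exp (∑ j ∈ Icc 1 t, -s * bernLLR q i h (a j ω) (y j ω)) ∂μ := by
        simp only [neg_neg, mul_zero, exp_zero, one_mul, mgf, hexp]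
    _ ≤ _ := hle

lemma sum_measureReal_LLRN_nonpos_le [IsProbabilityMeasure μ]
    (hproc : IsPricingProcessN μ ℱ q i a y) (hq : ∀ k, q i k ∈ Set.Icc 0 1) {h : Fin N}
    {κ m M : ℝ} (hκ0 : 0 < κ) (hmM : m < M) (hκ : ∀ k, κ ≤ klBern (q i k) (q h k))
    (hLLR : ∀ k (b : Fin 2), bernLLR q i h k b ∈ Set.Icc m M) (n : ℕ) :
    ∑ s ∈ Icc 1 n, μ.real {ω | LLRN q a y i h s ω ≤ 0} ≤ (M - m) ^ 2 / (2 * κ ^ 2) := by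
  have hc : 0 < 2 * κ ^ 2 / (M - m) ^ 2 := by
    have := sub_pos.2 hmM
    positivity
  calc ∑ s ∈ Icc 1 n, μ.real {ω | LLRN q a y i h s ω ≤ 0}
      ≤ ∑ s ∈ Icc 1 n, exp (-(2 * κ ^ 2 / (M - m) ^ 2)) ^ s :=
        sum_le_sum fun s _ => hproc.measureReal_LLRN_nonpos_le hq hκ0.le hκ hLLR s
    _ ≤ 1 / (2 * κ ^ 2 / (M - m) ^ 2) := sum_Icc_exp_neg_pow_le hc n
    _ = (M - m) ^ 2 / (2 * κ ^ 2) := one_div_div _ _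

lemma regret_le_mul_sum_measureReal [IsProbabilityMeasure μ]
    (hproc : IsPricingProcessN μ ℱ q i a y) (r : Fin N → ℝ) {R : ℝ} (hR : ∀ k, r i - r k ≤ R)
    (T : ℕ) :
    (T : ℝ) * r i - ∫ ω, ∑ t ∈ Icc 1 T, r (a t ω) ∂μ
      ≤ R * ∑ t ∈ Icc 1 T, μ.real {ω | a t ω ≠ i} := by
  have hint : ∀ t ∈ Icc 1 T, Integrable (fun ω => r (a t ω)) μ := fun t ht => by
    simpa using (integrable_const (1 : ℝ)).mul_comp_fintype
      (hproc.measurable_action (mem_Icc.1 ht).1) r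
  have hstep : ∀ t ∈ Icc 1 T, r i - ∫ ω, r (a t ω) ∂μ ≤ R * μ.real {ω | a t ω ≠ i} := by
    intro t ht
    have hS : MeasurableSet {ω | a t ω ≠ i} :=
      (hproc.measurable_action (mem_Icc.1 ht).1 (measurableSet_singleton i)).compl
    calc r i - ∫ ω, r (a t ω) ∂μ = ∫ ω, (r i - r (a t ω)) ∂μ := by
          rw [integral_sub (integrable_const _) (hint t ht), integral_const, probReal_univ,
            one_smul]
      _ ≤ ∫ ω, R * {ω | a t ω ≠ i}.indicator 1 ω ∂μ :=
          integral_mono ((integrable_const _).sub (hint t ht))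
            (((integrable_const 1).indicator hS).const_mul R) fun ω => by
              by_cases hω : a t ω = i <;> simp [hω, hR]
      _ = R * μ.real {ω | a t ω ≠ i} := by rw [integral_const_mul, integral_indicator_one hS]
  calc (T : ℝ) * r i - ∫ ω, ∑ t ∈ Icc 1 T, r (a t ω) ∂μ
      = ∑ t ∈ Icc 1 T, (r i - ∫ ω, r (a t ω) ∂μ) := by
        rw [integral_finsetSum _ hint, sum_sub_distrib, sum_const, Nat.card_Icc, nsmul_eq_mul,
          Nat.add_sub_cancel]
    _ ≤ ∑ t ∈ Icc 1 T, R * μ.real {ω | a t ω ≠ i} := sum_le_sum hstep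
    _ = R * ∑ t ∈ Icc 1 T, μ.real {ω | a t ω ≠ i} := (mul_sum _ _ _).symm

end IsPricingProcessN

lemma IsELRT.setOf_ne_subset (hpol : IsELRT q a y) (i : Fin N) {t : ℕ} (ht : 1 ≤ t) :
    {ω | a (t + 1) ω ≠ i} ⊆ ⋃ h ∈ univ.erase i, {ω | LLRN q a y i h t ω ≤ 0} := by
  intro ω hω
  by_contra hnot
  simp only [Set.mem_iUnion, mem_erase, mem_univ, and_true, exists_prop, not_exists,
    not_and] at hnot
  exact hω (hpol t ht ω i fun j hj => not_le.1 (hnot j hj))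

lemma IsELRT.sum_measureReal_ne_le [IsProbabilityMeasure μ] (hpol : IsELRT q a y) {C : Fin N → ℝ}
    (hC : ∀ h, h ≠ i → ∀ n, ∑ s ∈ Icc 1 n, μ.real {ω | LLRN q a y i h s ω ≤ 0} ≤ C h)
    (n : ℕ) :
    ∑ t ∈ Icc 1 (n + 1), μ.real {ω | a t ω ≠ i} ≤ 1 + ∑ h ∈ univ.erase i, C h := by
  have hshift : ∑ t ∈ Icc 1 (n + 1), μ.real {ω | a t ω ≠ i}
      = μ.real {ω | a 1 ω ≠ i} + ∑ s ∈ Icc 1 n, μ.real {ω | a (s + 1) ω ≠ i} := by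
    rw [Icc_eq_cons_Ioc (by omega), sum_cons, ← Icc_add_one_left_eq_Ioc, ← map_add_right_Icc,
      sum_map]
    rfl
  calc ∑ t ∈ Icc 1 (n + 1), μ.real {ω | a t ω ≠ i}
      ≤ 1 + ∑ s ∈ Icc 1 n, ∑ h ∈ univ.erase i, μ.real {ω | LLRN q a y i h s ω ≤ 0} := by
        rw [hshift]
        exact add_le_add measureReal_le_one <| sum_le_sum fun s hs =>
          (measureReal_mono (hpol.setOf_ne_subset i (mem_Icc.1 hs).1) (measure_ne_top _ _)).trans
            (measureReal_biUnion_finset_le _ _)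
    _ = 1 + ∑ h ∈ univ.erase i, ∑ s ∈ Icc 1 n, μ.real {ω | LLRN q a y i h s ω ≤ 0} := by
        rw [sum_comm]
    _ ≤ 1 + ∑ h ∈ univ.erase i, C h := by
        gcongr with h hh
        exact hC h (ne_of_mem_erase hh) n

end PricingProcess

/-- **Theorem 3 (ELRT achieves bounded regret for `N` demand models).** Here there are
`N + 2 ≥ 2` demand models. If the true demand model is `i`, then `a_h > 0` for every `h ≠ i`,
the expected number of times `t ∈ {1,…,T}` at which the ELRT policy selects a suboptimal arm
is at most `1 + ∑_{h ≠ i} C_h ≤ 1 + (N+1) · max_{h ≠ i} C_h` uniformly in the horizon `T`,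
and consequently the regret is bounded by a constant independent of `T`. -/
theorem elrt_bounded_regret
    (μ : Measure Ω) [IsProbabilityMeasure μ] (ℱ : Filtration ℕ mΩ)
    (q : Fin (N + 2) → Fin (N + 2) → ℝ)
    (hq : ∀ i k, q i k ∈ Set.Ioo (0 : ℝ) 1)
    (hni : ∀ j h, j ≠ h → ∀ k, q j k ≠ q h k)
    (i : Fin (N + 2)) (a : ℕ → Ω → Fin (N + 2)) (y : ℕ → Ω → ℕ)
    (hproc : IsPricingProcessN μ ℱ q i a y)
    (hpol : IsELRT q a y)
    (r : Fin (N + 2) → Fin (N + 2) → ℝ)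
    (aH mH MH C : Fin (N + 2) → ℝ)
    (haH : ∀ h, h ≠ i → aH h = Finset.univ.inf' ⟨0, Finset.mem_univ 0⟩
      (fun k : Fin (N + 2) => klBern (q i k) (q h k)))
    (hmH : ∀ h, h ≠ i → mH h = Finset.univ.inf' ⟨(0, 0), Finset.mem_univ _⟩
      (fun p : Fin (N + 2) × Fin 2 =>
        Real.log (bern (q i p.1) (p.2 : ℕ) / bern (q h p.1) (p.2 : ℕ))))
    (hMH : ∀ h, h ≠ i → MH h = Finset.univ.sup' ⟨(0, 0), Finset.mem_univ _⟩
      (fun p : Fin (N + 2) × Fin 2 =>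
        Real.log (bern (q i p.1) (p.2 : ℕ) / bern (q h p.1) (p.2 : ℕ))))
    (hC : ∀ h, h ≠ i → C h = (MH h - mH h) ^ 2 / (2 * (aH h) ^ 2)) :
    (∀ h, h ≠ i → 0 < aH h) ∧
      (∀ T : ℕ, 1 ≤ T →
        (∫ ω, (((Finset.Icc 1 T).filter (fun t => a t ω ≠ i)).card : ℝ) ∂μ)
          ≤ 1 + ∑ h ∈ Finset.univ.erase i, C h) ∧
      (1 + ∑ h ∈ Finset.univ.erase i, C h
        ≤ 1 + ((N : ℝ) + 1) * (Finset.univ.erase i).sup'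
            (by obtain ⟨j, hj⟩ := exists_ne i
                exact ⟨j, Finset.mem_erase.mpr ⟨hj, Finset.mem_univ j⟩⟩) C) ∧
      (∃ B : ℝ, ∀ T : ℕ, 1 ≤ T →
        (T : ℝ) * r i i - ∫ ω, ∑ t ∈ Finset.Icc 1 T, r i (a t ω) ∂μ ≤ B) := by
  have hkl : ∀ h, h ≠ i → ∀ k, aH h ≤ klBern (q i k) (q h k) := fun h hh k =>
    haH h hh ▸ inf'_le _ (mem_univ k)
  have hLLR : ∀ h, h ≠ i → ∀ k (b : Fin 2), bernLLR q i h k b ∈ Set.Icc (mH h) (MH h) :=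
    fun h hh k b => ⟨hmH h hh ▸ inf'_le _ (mem_univ (k, b)),
      hMH h hh ▸ le_sup' (fun p : Fin (N + 2) × Fin 2 => bernLLR q i h p.1 p.2) (mem_univ (k, b))⟩
  have haH_pos : ∀ h, h ≠ i → 0 < aH h := fun h hh =>
    haH h hh ▸ (lt_inf'_iff _).2 fun k _ => klBern_pos (hq i k) (hq h k) (hni i h hh.symm k)
  have hmM : ∀ h, h ≠ i → mH h < MH h := fun h hh =>
    lt_of_bernLLR_mem_Icc (hq i i) (hq h i) (hni i h hh.symm i) (hLLR h hh i 1) (hLLR h hh i 0)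
  have hsum : ∀ n, ∑ t ∈ Icc 1 (n + 1), μ.real {ω | a t ω ≠ i} ≤ 1 + ∑ h ∈ univ.erase i, C h :=
    hpol.sum_measureReal_ne_le fun h hh n => hC h hh ▸
      hproc.sum_measureReal_LLRN_nonpos_le (fun k => Set.Ioo_subset_Icc_self (hq i k))
        (haH_pos h hh) (hmM h hh) (hkl h hh) (hLLR h hh) n
  refine ⟨haH_pos, fun T hT => ?_, ?_, ?_⟩
  · obtain ⟨n, rfl⟩ := Nat.exists_eq_add_of_le' hT
    rw [integral_card_filter (Icc 1 (n + 1)) (fun t ω => a t ω ≠ i) fun t ht =>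
      (hproc.measurable_action (mem_Icc.1 ht).1 (measurableSet_singleton i)).compl]
    exact hsum n
  · gcongr 1 + ?_
    have hcard : (#(univ.erase i) : ℝ) = N + 1 := by
      rw [card_erase_of_mem (mem_univ i), card_univ, Fintype.card_fin]
      norm_num
    rw [← hcard, ← nsmul_eq_mul]
    exact sum_le_card_nsmul _ _ _ fun h hh => le_sup' C hh
  · set R := univ.sup' univ_nonempty fun k => r i i - r i k
    have hR : ∀ k, r i i - r i k ≤ R := fun k => le_sup' (fun k => r i i - r i k) (mem_univ k)
    refine ⟨R * (1 + ∑ h ∈ univ.erase i, C h), fun T hT => ?_⟩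
    obtain ⟨n, rfl⟩ := Nat.exists_eq_add_of_le' hT
    exact (hproc.regret_le_mul_sum_measureReal (r i) hR _).trans
      (mul_le_mul_of_nonneg_left (hsum n) (by simpa using hR i))
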